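/- arXiv:1801.09458 — 5 statements merged into one kernel-verified Lean document; each statement's English description precedes it below -/
import Mathlib

section
/- Let α ∈ (0,1) and define k(z) = z^(α-1)/Γ(α). Let G : [0,∞) → (0,∞) be strictly increasing and continuous, let T > 0, and suppose g is a continuous function on [0,T] satisfying g(t) = ∫₀ᵗ k(t-s) G(g(s)) ds for all t ∈ [0,T]. If f is continuous on [0,T] and satisfies f(t) ≥ ∫₀ᵗ k(t-s) G(f(s)) ds for all t ∈ [0,T], then f(t) ≥ g(t) for all t ∈ [0,T]. -/
open MeasureTheory Set

lemma volterra_kernel_integrable {α : ℝ} (hα : α ∈ Set.Ioo (0:ℝ) 1) {a b : ℝ} (hab : a ≤ b)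
    {φ : ℝ → ℝ} (hφ : ContinuousOn φ (Set.Icc a b)) :
    IntervalIntegrable (fun s => (b - s) ^ (α - 1) / Real.Gamma α * φ s) volume a b := by
  have h0 : IntervalIntegrable (fun x : ℝ => x ^ (α - 1)) volume 0 (b - a) :=
    intervalIntegral.intervalIntegrable_rpow' (by linarith [hα.1])
  have h1 : IntervalIntegrable (fun s => (b - s) ^ (α - 1)) volume a b := by
    have := (h0.comp_sub_left b).symm
    simpa using this
  have h2 := h1.mul_continuousOn (g := φ) (by rwa [Set.uIcc_of_le hab])
  have h3 := h2.div_const (Real.Gamma α)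
  have : (fun s => (b - s) ^ (α - 1) / Real.Gamma α * φ s)
      = fun s => ((b - s) ^ (α - 1) * φ s) / Real.Gamma α := by funext s; ring
  rw [this]; exact h3

lemma volterra_shift (α T : ℝ) (hα : α ∈ Set.Ioo (0:ℝ) 1) (hT : 0 < T)
    (G : ℝ → ℝ) (hGpos : ∀ w ≥ (0:ℝ), 0 < G w)
    (hGmono : StrictMonoOn G (Set.Ici 0)) (hGcont : ContinuousOn G (Set.Ici 0))
    (g f : ℝ → ℝ)
    (hgcont : ContinuousOn g (Set.Icc 0 T)) (hfcont : ContinuousOn f (Set.Icc 0 T))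
    (hgnn : ∀ t ∈ Set.Icc (0:ℝ) T, 0 ≤ g t) (hfnn : ∀ t ∈ Set.Icc (0:ℝ) T, 0 ≤ f t)
    (hg : ∀ t ∈ Set.Icc (0:ℝ) T,
      g t = ∫ s in (0:ℝ)..t, (t - s) ^ (α - 1) / Real.Gamma α * G (g s))
    (hf : ∀ t ∈ Set.Icc (0:ℝ) T,
      f t ≥ ∫ s in (0:ℝ)..t, (t - s) ^ (α - 1) / Real.Gamma α * G (f s))
    (δ : ℝ) (hδ0 : 0 < δ) (hδT : δ < T) :
    ∀ t ∈ Set.Icc (0:ℝ) (T - δ), g t ≤ f (t + δ) := by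
  have hΓ : 0 < Real.Gamma α := Real.Gamma_pos_of_pos hα.1
  -- min of G ∘ f on [0, δ/2]
  have hGfcont : ∀ b ∈ Set.Icc (0:ℝ) T, ContinuousOn (fun s => G (f s)) (Set.Icc 0 b) := by
    intro b hb
    have h1 : ContinuousOn f (Set.Icc 0 b) := hfcont.mono (Icc_subset_Icc le_rfl hb.2)
    exact hGcont.comp h1 (fun x hx => hfnn x ⟨hx.1, hx.2.trans hb.2⟩)
  have hδ2T : δ / 2 ∈ Set.Icc (0:ℝ) T := ⟨by linarith, by linarith⟩
  obtain ⟨s₀, hs₀, hmin⟩ := isCompact_Icc.exists_isMinOn (α := ℝ)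
    (s := Set.Icc (0:ℝ) (δ/2)) ⟨0, le_rfl, by linarith⟩ (hGfcont (δ/2) hδ2T)
  set c := G (f s₀) with hc_def
  have hcpos : 0 < c := hGpos _ (hfnn s₀ ⟨hs₀.1, hs₀.2.trans hδ2T.2⟩)
  set m := (δ/2) * (T ^ (α - 1) / Real.Gamma α * c) with hm_def
  have hTpow : 0 < T ^ (α - 1) := Real.rpow_pos_of_pos hT _
  have hmpos : 0 < m := by positivity
  -- key step
  have key : ∀ t ∈ Set.Icc (0:ℝ) (T - δ),
      (∀ s, 0 ≤ s → s < t → g s ≤ f (s + δ)) → g t + m ≤ f (t + δ) := by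
    intro t ht hlt
    have htT : t + δ ∈ Set.Icc (0:ℝ) T := ⟨by linarith [ht.1], by linarith [ht.2]⟩
    have h0tδ : (0:ℝ) ≤ t + δ := htT.1
    -- integrability of full kernel integrand on [0, t+δ]
    have Iab : IntervalIntegrable (fun s => ((t+δ) - s) ^ (α - 1) / Real.Gamma α * G (f s))
        volume 0 (t+δ) := volterra_kernel_integrable hα h0tδ (hGfcont (t+δ) htT)
    have sub1 : Set.uIcc (0:ℝ) δ ⊆ Set.uIcc (0:ℝ) (t+δ) := by
      rw [Set.uIcc_of_le (by linarith), Set.uIcc_of_le h0tδ]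
      exact Icc_subset_Icc le_rfl (by linarith [ht.1])
    have sub2 : Set.uIcc δ (t+δ) ⊆ Set.uIcc (0:ℝ) (t+δ) := by
      rw [Set.uIcc_of_le (by linarith [ht.1]), Set.uIcc_of_le h0tδ]
      exact Icc_subset_Icc (by linarith) le_rfl
    have sub3 : Set.uIcc (0:ℝ) (δ/2) ⊆ Set.uIcc (0:ℝ) δ := by
      rw [Set.uIcc_of_le (by linarith), Set.uIcc_of_le (by linarith : (0:ℝ) ≤ δ)]
      exact Icc_subset_Icc le_rfl (by linarith)
    have sub4 : Set.uIcc (δ/2) δ ⊆ Set.uIcc (0:ℝ) δ := by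
      rw [Set.uIcc_of_le (by linarith), Set.uIcc_of_le (by linarith : (0:ℝ) ≤ δ)]
      exact Icc_subset_Icc (by linarith) le_rfl
    have I01 := Iab.mono_set sub1
    have I12 := Iab.mono_set sub2
    have I0h := I01.mono_set sub3
    have Ih1 := I01.mono_set sub4
    -- split the integral
    have hsplit : (∫ s in (0:ℝ)..(t+δ), ((t+δ) - s) ^ (α - 1) / Real.Gamma α * G (f s))
        = (∫ s in (0:ℝ)..δ, ((t+δ) - s) ^ (α - 1) / Real.Gamma α * G (f s))
          + ∫ s in δ..(t+δ), ((t+δ) - s) ^ (α - 1) / Real.Gamma α * G (f s) :=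
      (intervalIntegral.integral_add_adjacent_intervals I01 I12).symm
    -- change of variables in the second piece
    have hI2 : (∫ s in δ..(t+δ), ((t+δ) - s) ^ (α - 1) / Real.Gamma α * G (f s))
        = ∫ u in (0:ℝ)..t, (t - u) ^ (α - 1) / Real.Gamma α * G (f (u + δ)) := by
      have hcv := intervalIntegral.integral_comp_add_right (a := (0:ℝ)) (b := t)
        (fun s => ((t+δ) - s) ^ (α - 1) / Real.Gamma α * G (f s)) δ
      rw [zero_add] at hcv
      rw [← hcv]
      simp only [add_sub_add_right_eq_sub]
    -- monotone comparison on [0, t]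
    have hgIcc : t ∈ Set.Icc (0:ℝ) T := ⟨ht.1, by linarith [ht.2]⟩
    have Ig : IntervalIntegrable (fun s => (t - s) ^ (α - 1) / Real.Gamma α * G (g s))
        volume 0 t := by
      refine volterra_kernel_integrable hα ht.1 ?_
      exact hGcont.comp (hgcont.mono (Icc_subset_Icc le_rfl hgIcc.2))
        (fun x hx => hgnn x ⟨hx.1, hx.2.trans hgIcc.2⟩)
    have hFc : ContinuousOn (fun u => f (u + δ)) (Set.Icc 0 t) := by
      refine hfcont.comp (Continuous.continuousOn (continuous_id.add continuous_const)) ?_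
      intro x hx
      show x + δ ∈ Set.Icc (0:ℝ) T
      exact ⟨by linarith [hx.1], by linarith [hx.2, ht.2]⟩
    have IF : IntervalIntegrable (fun u => (t - u) ^ (α - 1) / Real.Gamma α * G (f (u + δ)))
        volume 0 t := by
      refine volterra_kernel_integrable hα ht.1 ?_
      exact hGcont.comp hFc (fun x hx => hfnn _ ⟨by linarith [hx.1], by linarith [hx.2, ht.2]⟩)
    have hmono : (∫ s in (0:ℝ)..t, (t - s) ^ (α - 1) / Real.Gamma α * G (g s))
        ≤ ∫ u in (0:ℝ)..t, (t - u) ^ (α - 1) / Real.Gamma α * G (f (u + δ)) := by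
      refine intervalIntegral.integral_mono_ae_restrict ht.1 Ig IF ?_
      have h1 : ∀ᵐ s ∂(volume.restrict (Set.Icc (0:ℝ) t)), s ∈ Set.Icc (0:ℝ) t :=
        ae_restrict_mem measurableSet_Icc
      have h2 : ∀ᵐ s : ℝ ∂(volume.restrict (Set.Icc (0:ℝ) t)), s ≠ t := by
        refine ae_restrict_of_ae ?_
        rw [ae_iff]
        have : {s : ℝ | ¬ s ≠ t} = {t} := by ext x; simp
        rw [this]
        exact measure_singleton t
      filter_upwards [h1, h2] with s hs hst
      have hknn : 0 ≤ (t - s) ^ (α - 1) / Real.Gamma α := by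
        have : (0:ℝ) ≤ t - s := by linarith [hs.2]
        positivity
      have hslt : s < t := lt_of_le_of_ne hs.2 hst
      have hGle : G (g s) ≤ G (f (s + δ)) := by
        have hggle : g s ≤ f (s + δ) := hlt s hs.1 hslt
        exact hGmono.monotoneOn (hgnn s ⟨hs.1, by linarith [ht.2]⟩)
          (hfnn _ ⟨by linarith [hs.1], by linarith [ht.2]⟩) hggle
      exact mul_le_mul_of_nonneg_left hGle hknn
    -- lower bound on the first piece
    have hI1 : m ≤ ∫ s in (0:ℝ)..δ, ((t+δ) - s) ^ (α - 1) / Real.Gamma α * G (f s) := by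
      have hsplit2 : (∫ s in (0:ℝ)..δ, ((t+δ) - s) ^ (α - 1) / Real.Gamma α * G (f s))
          = (∫ s in (0:ℝ)..(δ/2), ((t+δ) - s) ^ (α - 1) / Real.Gamma α * G (f s))
            + ∫ s in (δ/2)..δ, ((t+δ) - s) ^ (α - 1) / Real.Gamma α * G (f s) :=
        (intervalIntegral.integral_add_adjacent_intervals I0h Ih1).symm
      have hnn2 : (0:ℝ) ≤ ∫ s in (δ/2)..δ, ((t+δ) - s) ^ (α - 1) / Real.Gamma α * G (f s) := by
        refine intervalIntegral.integral_nonneg (by linarith) ?_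
        intro s hs
        have h1 : (0:ℝ) ≤ (t+δ) - s := by linarith [hs.2, ht.1]
        have h2 : 0 < G (f s) := hGpos _ (hfnn s ⟨by linarith [hs.1], by linarith [hs.2, ht.2]⟩)
        positivity
      have hlow : m ≤ ∫ s in (0:ℝ)..(δ/2), ((t+δ) - s) ^ (α - 1) / Real.Gamma α * G (f s) := by
        have hconst : (∫ _ in (0:ℝ)..(δ/2), T ^ (α - 1) / Real.Gamma α * c) = m := by
          rw [intervalIntegral.integral_const, smul_eq_mul, hm_def]
          ring
        rw [← hconst]
        refine intervalIntegral.integral_mono_on (by linarith) intervalIntegrable_const I0h ?_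
        intro s hs
        have hpos : 0 < (t+δ) - s := by linarith [hs.2, ht.1]
        have hleT : (t+δ) - s ≤ T := by linarith [ht.2, hs.1]
        have hbase : T ^ (α - 1) ≤ ((t+δ) - s) ^ (α - 1) :=
          Real.rpow_le_rpow_of_nonpos hpos hleT (by linarith [hα.2])
        have hcle : c ≤ G (f s) := hmin hs
        have h2 : 0 < G (f s) := hGpos _ (hfnn s ⟨hs.1, by linarith [hs.2, ht.2]⟩)
        calc T ^ (α - 1) / Real.Gamma α * c
            ≤ ((t+δ) - s) ^ (α - 1) / Real.Gamma α * c := by gcongr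
          _ ≤ ((t+δ) - s) ^ (α - 1) / Real.Gamma α * G (f s) := by
              apply mul_le_mul_of_nonneg_left hcle (by positivity)
      rw [hsplit2]
      linarith
    -- combine
    have hfineq := hf (t+δ) htT
    have hgeq := hg t hgIcc
    rw [hsplit, hI2] at hfineq
    linarith [hfineq, hmono, hI1]
  -- contradiction argument
  by_contra hcon
  push_neg at hcon
  obtain ⟨t₀, ht₀, hbad⟩ := hcon
  set B : Set ℝ := {t ∈ Set.Icc (0:ℝ) (T - δ) | f (t + δ) ≤ g t} with hB_def
  have hBne : B.Nonempty := ⟨t₀, ht₀, hbad.le⟩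
  have hBbdd : BddBelow B := ⟨0, fun x hx => hx.1.1⟩
  have hBclosed : IsClosed B := by
    have hFcont : ContinuousOn (fun t => g t - f (t + δ)) (Set.Icc 0 (T - δ)) := by
      refine ContinuousOn.sub (hgcont.mono (Icc_subset_Icc le_rfl (by linarith))) ?_
      refine hfcont.comp (Continuous.continuousOn (continuous_id.add continuous_const)) ?_
      intro x hx
      show x + δ ∈ Set.Icc (0:ℝ) T
      exact ⟨by linarith [hx.1], by linarith [hx.2]⟩
    have : B = Set.Icc (0:ℝ) (T - δ) ∩ (fun t => g t - f (t + δ)) ⁻¹' (Set.Ici 0) := by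
      ext x; simp only [hB_def, mem_setOf_eq, mem_inter_iff, mem_preimage, mem_Ici, sub_nonneg]
    rw [this]
    exact hFcont.preimage_isClosed_of_isClosed isClosed_Icc isClosed_Ici
  set u := sInf B with hu_def
  have huB : u ∈ B := hBclosed.csInf_mem hBne hBbdd
  have hkey := key u huB.1 (by
    intro s hs0 hsu
    by_contra hsbad
    push_neg at hsbad
    have : s ∈ B := ⟨⟨hs0, by linarith [hsu, huB.1.2]⟩, hsbad.le⟩
    exact absurd (csInf_le hBbdd this) (not_le.mpr hsu))
  linarith [huB.2, hkey, hmpos]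

/-- Comparison lemma: a continuous subsolution of a Volterra integral equation with
weakly singular kernel `k(z) = z^(α-1)/Γ(α)` and positive, strictly increasing,
continuous nonlinearity `G` dominates the solution. -/
theorem volterra_subsolution_comparison (α T : ℝ) (hα : α ∈ Set.Ioo (0:ℝ) 1) (hT : 0 < T)
    (G : ℝ → ℝ) (hGpos : ∀ w ≥ (0:ℝ), 0 < G w)
    (hGmono : StrictMonoOn G (Set.Ici 0)) (hGcont : ContinuousOn G (Set.Ici 0))
    (g f : ℝ → ℝ)
    (hgcont : ContinuousOn g (Set.Icc 0 T)) (hfcont : ContinuousOn f (Set.Icc 0 T))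
    (hgnn : ∀ t ∈ Set.Icc (0:ℝ) T, 0 ≤ g t) (hfnn : ∀ t ∈ Set.Icc (0:ℝ) T, 0 ≤ f t)
    (hg : ∀ t ∈ Set.Icc (0:ℝ) T,
      g t = ∫ s in (0:ℝ)..t, (t - s) ^ (α - 1) / Real.Gamma α * G (g s))
    (hf : ∀ t ∈ Set.Icc (0:ℝ) T,
      f t ≥ ∫ s in (0:ℝ)..t, (t - s) ^ (α - 1) / Real.Gamma α * G (f s)) :
    ∀ t ∈ Set.Icc (0:ℝ) T, g t ≤ f t := by
  have shift := volterra_shift α T hα hT G hGpos hGmono hGcont g f hgcont hfcont hgnn hfnn hg hf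
  -- first: all t < T
  have main : ∀ t ∈ Set.Icc (0:ℝ) T, t < T → g t ≤ f t := by
    intro t ht htT
    refine le_of_forall_pos_le_add ?_
    intro ε hε
    obtain ⟨δ₀, hδ₀, hδ₀p⟩ := Metric.continuousWithinAt_iff.1 (hfcont t ht) ε hε
    set δ := min (δ₀/2) ((T - t)/2) with hδ_def
    have hδpos : 0 < δ := lt_min (by linarith) (by linarith)
    have hδle : δ ≤ (T - t)/2 := min_le_right _ _
    have hδlt : δ < T := by linarith [ht.1]
    have h1 : g t ≤ f (t + δ) := shift δ hδpos hδlt t ⟨ht.1, by linarith⟩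
    have h2 : dist (f (t + δ)) (f t) < ε := by
      refine hδ₀p ⟨by linarith [ht.1], by linarith⟩ ?_
      rw [Real.dist_eq]
      have : |t + δ - t| = δ := by rw [show t + δ - t = δ by ring]; exact abs_of_pos hδpos
      rw [this]
      calc δ ≤ δ₀/2 := min_le_left _ _
        _ < δ₀ := by linarith
    have h3 : f (t + δ) - f t < ε := by
      rw [Real.dist_eq] at h2; exact (abs_lt.1 h2).2
    linarith
  intro t ht
  rcases lt_or_eq_of_le ht.2 with h | h
  · exact main t ht h
  · -- t = T, use continuity from the left
    subst h
    refine le_of_forall_pos_le_add ?_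
    intro ε hε
    obtain ⟨δ₀, hδ₀, hδ₀p⟩ := Metric.continuousWithinAt_iff.1 (hfcont t ht) (ε/2) (by linarith)
    obtain ⟨δ₁, hδ₁, hδ₁p⟩ := Metric.continuousWithinAt_iff.1 (hgcont t ht) (ε/2) (by linarith)
    set x := t - min (min δ₀ δ₁) t / 2 with hx_def
    have hmpos : 0 < min (min δ₀ δ₁) t := lt_min (lt_min hδ₀ hδ₁) hT
    have hx0 : 0 ≤ x := by
      have : min (min δ₀ δ₁) t ≤ t := min_le_right _ _
      simp only [hx_def]; linarith
    have hxt : x < t := by simp only [hx_def]; linarith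
    have hxIcc : x ∈ Set.Icc (0:ℝ) t := ⟨hx0, hxt.le⟩
    have hdist : dist x t < min δ₀ δ₁ := by
      rw [Real.dist_eq]
      have : |x - t| = min (min δ₀ δ₁) t / 2 := by
        rw [show x - t = -(min (min δ₀ δ₁) t / 2) by simp [hx_def], abs_neg,
          abs_of_pos (by linarith)]
      rw [this]
      calc min (min δ₀ δ₁) t / 2 < min (min δ₀ δ₁) t := by linarith
        _ ≤ min δ₀ δ₁ := min_le_left _ _
    have hfx : dist (f x) (f t) < ε/2 := hδ₀p hxIcc (lt_of_lt_of_le hdist (min_le_left _ _))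
    have hgx : dist (g x) (g t) < ε/2 := hδ₁p hxIcc (lt_of_lt_of_le hdist (min_le_right _ _))
    have hmain := main x hxIcc hxt
    have h1 : f x - f t < ε/2 := by
      rw [Real.dist_eq] at hfx; exact (abs_lt.1 hfx).2
    have h2 : -(ε/2) < g x - g t := by
      rw [Real.dist_eq] at hgx; exact (abs_lt.1 hgx).1
    linarith
end

section
/- For α ∈ (0,1) and every integer n ≥ 1, the sum ∑_{k=1}^{n-1} k^(α-1) (n-k)^(α-1) is at most ∫₀ⁿ x^(α-1)(n-x)^(α-1) dx = n^(2α-1) · Γ(α)²/Γ(2α). -/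
/-!
On `(0, n)` the integrand equals `(x (n - x))^(α - 1)`, a nonpositive power of a parabola, so it
decreases up to `n / 2` and increases after it. Hence each term with `k ≤ n / 2` is bounded by the
integral over `[k - 1, k]`, each term with `k > n / 2` by the integral over `[k, k + 1]`; these unit
intervals are disjoint, and the remaining one is bounded below by `0`. The value of the integral is
the scaled Beta integral `B(s, t) = Γ(s) Γ(t) / Γ(s + t)`.
-/

open MeasureTheory Finset

-- Monotonicity on a half-open interval, unlike `AntitoneOn.sum_le_integral_Ico`: the integrand
-- takes the junk value `0 ^ (α - 1) = 0` at the endpoints `0` and `n`.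
open intervalIntegral in
theorem sum_Ico_le_integral_of_antitoneOn_Ioc {f : ℝ → ℝ} {a b : ℕ} (hab : a ≤ b)
    (hf : AntitoneOn f (Set.Ioc (a : ℝ) b)) (hint : IntervalIntegrable f volume a b) :
    ∑ i ∈ Ico a b, f ↑(i + 1) ≤ ∫ x in a..b, f x := by
  have hpiece : ∀ i ∈ Set.Ico a b, IntervalIntegrable f volume i ↑(i + 1) := by
    rintro i ⟨hai, hib⟩
    refine hint.mono_set ?_
    rw [Set.uIcc_of_le (by simp), Set.uIcc_of_le (by simpa)]
    exact Set.Icc_subset_Icc (by simpa) (by exact_mod_cast hib)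
  calc ∑ i ∈ Ico a b, f ↑(i + 1)
      = ∑ i ∈ Ico a b, ∫ _ in (i : ℝ)..↑(i + 1), f ↑(i + 1) := by simp
    _ ≤ ∑ i ∈ Ico a b, ∫ x in (i : ℝ)..↑(i + 1), f x := by
      gcongr with i hi
      rw [Finset.mem_Ico] at hi
      refine integral_mono_on_of_le_Ioo (by simp) intervalIntegrable_const (hpiece i hi) ?_
      obtain ⟨hai, hib⟩ := hi
      rw [← Nat.add_one_le_iff] at hib
      rify at hai hib
      intro x hx
      exact hf ⟨by grind, by grind⟩ ⟨by grind, by grind⟩ hx.2.le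
    _ = ∫ x in a..b, f x := sum_integral_adjacent_intervals_Ico (a := (↑·)) hab hpiece

theorem sum_Ico_le_integral_of_monotoneOn_Ico {f : ℝ → ℝ} {a b : ℕ} (hab : a ≤ b)
    (hf : MonotoneOn f (Set.Ico (a : ℝ) b)) (hint : IntervalIntegrable f volume a b) :
    ∑ i ∈ Ico a b, f i ≤ ∫ x in a..b, f x := by
  refine sum_Ico_le_integral_of_le hab (fun i hi x hx ↦ ?_)
    ((intervalIntegrable_iff_integrableOn_Ico_of_le (by simpa using hab)).mp hint)
  obtain ⟨hai, hib⟩ := hi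
  rw [← Nat.add_one_le_iff] at hib
  rify at hai hib
  exact hf ⟨by grind, by grind⟩ ⟨by grind, by grind⟩ hx.1

open intervalIntegral in
theorem sum_Ico_one_le_integral_of_antitoneOn_of_monotoneOn {f : ℝ → ℝ} {n : ℕ} {c : ℝ}
    (hc : c ∈ Set.Ico 0 (n : ℝ)) (hanti : AntitoneOn f (Set.Ioc 0 c))
    (hmono : MonotoneOn f (Set.Ico c n)) (hf0 : ∀ x ∈ Set.Icc (0 : ℝ) n, 0 ≤ f x)
    (hint : IntervalIntegrable f volume 0 n) :
    ∑ k ∈ Ico 1 n, f k ≤ ∫ x in (0 : ℝ)..n, f x := by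
  obtain ⟨hc0, hcn⟩ := hc
  set m := ⌊c⌋₊
  have hmc : (m : ℝ) ≤ c := Nat.floor_le hc0
  have hcm : c < m + 1 := Nat.lt_floor_add_one c
  have hmn : m + 1 ≤ n := (Nat.floor_lt hc0).mpr hcn
  have hmn' : (m : ℝ) + 1 ≤ n := by exact_mod_cast hmn
  have hint' : ∀ a b : ℝ, 0 ≤ a → a ≤ b → b ≤ n → IntervalIntegrable f volume a b :=
    fun a b ha hab hb ↦ hint.mono_set (by
      rw [Set.uIcc_of_le hab, Set.uIcc_of_le (by positivity)]
      exact Set.Icc_subset_Icc ha hb)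
  have hleft := hint' 0 m le_rfl (by positivity) (by linarith)
  have hmid := hint' m (m + 1) (by positivity) (by linarith) hmn'
  have hright := hint' (m + 1) n (by positivity) hmn' le_rfl
  calc ∑ k ∈ Ico 1 n, f k = ∑ i ∈ Ico 0 m, f ↑(i + 1) + ∑ k ∈ Ico (m + 1) n, f k := by
        rw [← sum_Ico_consecutive _ (by omega : 1 ≤ m + 1) hmn, sum_Ico_add' (fun k : ℕ ↦ f k)]
    _ ≤ (∫ x in (0 : ℝ)..m, f x) + ∫ x in (m + 1 : ℝ)..n, f x := by
      gcongr
      · simpa using sum_Ico_le_integral_of_antitoneOn_Ioc (Nat.zero_le m)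
          (hanti.mono (by simpa using Set.Ioc_subset_Ioc_right hmc)) (by simpa using hleft)
      · simpa using sum_Ico_le_integral_of_monotoneOn_Ico hmn
          (hmono.mono (by simpa using Set.Ico_subset_Ico_left hcm.le)) (by simpa using hright)
    _ ≤ (∫ x in (0 : ℝ)..m, f x) + (∫ x in (m : ℝ)..m + 1, f x) + ∫ x in (m + 1 : ℝ)..n, f x := by
      gcongr
      refine le_add_of_nonneg_right (integral_nonneg (by linarith) fun x hx ↦ hf0 x ?_)
      exact ⟨(Nat.cast_nonneg m).trans hx.1, hx.2.trans hmn'⟩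
    _ = ∫ x in (0 : ℝ)..n, f x := by
      rw [integral_add_adjacent_intervals hleft hmid,
        integral_add_adjacent_intervals (hleft.trans hmid) hright]

theorem rpow_mul_rpow_sub_antitoneOn {p a : ℝ} (hp : p ≤ 0) :
    AntitoneOn (fun x : ℝ ↦ x ^ p * (a - x) ^ p) (Set.Ioc 0 (a / 2)) := by
  rintro x ⟨hx0, hxa⟩ y ⟨hy0, hya⟩ hxy
  simp only
  rw [← Real.mul_rpow hx0.le (by linarith), ← Real.mul_rpow hy0.le (by linarith)]
  exact Real.rpow_le_rpow_of_nonpos (by nlinarith) (by nlinarith) hp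

theorem rpow_mul_rpow_sub_monotoneOn {p a : ℝ} (hp : p ≤ 0) :
    MonotoneOn (fun x : ℝ ↦ x ^ p * (a - x) ^ p) (Set.Ico (a / 2) a) := by
  rintro x ⟨hax, hxa⟩ y ⟨hay, hya⟩ hxy
  simp only
  rw [← Real.mul_rpow (by linarith) (by linarith), ← Real.mul_rpow (by linarith) (by linarith)]
  exact Real.rpow_le_rpow_of_nonpos (by nlinarith) (by nlinarith) hp

theorem integral_rpow_mul_sub_rpow {s t a : ℝ} (hs : 0 < s) (ht : 0 < t) (ha : 0 < a) :
    ∫ x in (0 : ℝ)..a, x ^ (s - 1) * (a - x) ^ (t - 1)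
      = a ^ (s + t - 1) * Real.Gamma s * Real.Gamma t / Real.Gamma (s + t) := by
  have hcast : ((∫ x in (0 : ℝ)..a, x ^ (s - 1) * (a - x) ^ (t - 1) : ℝ) : ℂ)
      = ∫ x in (0 : ℝ)..a, (x : ℂ) ^ ((s : ℂ) - 1) * ((a : ℂ) - x) ^ ((t : ℂ) - 1) := by
    rw [← intervalIntegral.integral_ofReal]
    refine intervalIntegral.integral_congr fun x hx ↦ ?_
    rw [Set.uIcc_of_le ha.le] at hx
    simp only [Complex.ofReal_mul]
    rw [Complex.ofReal_cpow hx.1, Complex.ofReal_cpow (sub_nonneg.mpr hx.2)]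
    push_cast
    ring
  have hGamma : Complex.Gamma (s + t) ≠ 0 := by
    rw [← Complex.ofReal_add, Complex.Gamma_ofReal]
    exact_mod_cast (Real.Gamma_pos_of_pos (add_pos hs ht)).ne'
  rw [← Complex.ofReal_inj, hcast, Complex.betaIntegral_scaled _ _ ha,
    ← mul_div_cancel_left₀ (Complex.betaIntegral s t) hGamma,
    ← Complex.Gamma_mul_Gamma_eq_betaIntegral (by simpa) (by simpa)]
  push_cast [Complex.ofReal_cpow ha.le, ← Complex.Gamma_ofReal]
  ring

/-- For `α ∈ (0,1)` and `n ≥ 1`, the convolution sum `∑_{k=1}^{n-1} k^(α-1)(n-k)^(α-1)`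
is bounded by `∫₀ⁿ x^(α-1)(n-x)^(α-1) dx`, which equals `n^(2α-1) Γ(α)²/Γ(2α)`. -/
theorem convolution_sum_le_beta (α : ℝ) (hα : α ∈ Set.Ioo (0:ℝ) 1) (n : ℕ) (hn : 1 ≤ n) :
    (∑ k ∈ Finset.Ico 1 n, (k : ℝ) ^ (α - 1) * ((n : ℝ) - k) ^ (α - 1)
        ≤ ∫ x in (0:ℝ)..(n:ℝ), x ^ (α - 1) * ((n : ℝ) - x) ^ (α - 1)) ∧
    (∫ x in (0:ℝ)..(n:ℝ), x ^ (α - 1) * ((n : ℝ) - x) ^ (α - 1)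
        = (n : ℝ) ^ (2 * α - 1) * Real.Gamma α ^ 2 / Real.Gamma (2 * α)) := by
  obtain ⟨hα0, hα1⟩ := hα
  have hn0 : (0 : ℝ) < n := by exact_mod_cast hn
  have hvalue : ∫ x in (0:ℝ)..(n:ℝ), x ^ (α - 1) * ((n : ℝ) - x) ^ (α - 1)
      = (n : ℝ) ^ (2 * α - 1) * Real.Gamma α ^ 2 / Real.Gamma (2 * α) := by
    rw [integral_rpow_mul_sub_rpow hα0 hα0 hn0, ← two_mul]
    ring
  -- the integral is positive, hence not the junk value of a non-integrable integrand
  have hint : IntervalIntegrable (fun x : ℝ ↦ x ^ (α - 1) * ((n : ℝ) - x) ^ (α - 1)) volume 0 n :=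
    intervalIntegral.intervalIntegrable_of_integral_ne_zero (by rw [hvalue]; positivity)
  refine ⟨?_, hvalue⟩
  exact sum_Ico_one_le_integral_of_antitoneOn_of_monotoneOn ⟨by positivity, by linarith⟩
    (rpow_mul_rpow_sub_antitoneOn (by linarith)) (rpow_mul_rpow_sub_monotoneOn (by linarith))
    (fun x hx ↦ mul_nonneg (Real.rpow_nonneg hx.1 _) (Real.rpow_nonneg (sub_nonneg.2 hx.2) _)) hint
end

section
/- Let α ∈ (1/2,1), d₁ > 0, d₂ ∈ ℝ, v_n = Γ(αn+1)/Γ(αn-α+1), and define a₁ = d₁/v₁ and a_{n+1} = (d₂ a_n + ∑_{k=1}^{n-1} a_k a_{n-k})/v_{n+1} for n ≥ 1. Then there exists A > 0 such that |a_n| ≤ Aⁿ n^(α-1) for all n ≥ 1. In particular, the power series ∑_{n≥1} a_n zⁿ has positive radius of convergence. -/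
/-!
We show `|a n| ≤ Bⁿ / √n` by strong induction. Wendel's inequality (log-convexity of `Γ`)
together with `α > 1/2` gives `v n ≥ √n / 3`, and the convolution kernel satisfies
`∑_{0<k<n} 1 / (√k √(n-k)) ≤ 4` uniformly in `n`, since `√n ≤ √k + √(n-k)` splits each term
into `(1/√k + 1/√(n-k)) / √n` and `∑_{0<k≤n} 1/√k ≤ 2√n`. Hence the recursion reproduces the
bound once `B ≥ 3 (|d₂| + 4)`; finally `n^(-1/2) ≤ n^(α-1)`, and the series converges for
`|z| < 1/B`.
-/

open Finset Real

theorem sqrt_add_le_sqrt_add_sqrt {x y : ℝ} (hx : 0 ≤ x) (hy : 0 ≤ y) :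
    √(x + y) ≤ √x + √y := by
  rw [sqrt_le_left (by positivity)]
  nlinarith [sq_sqrt hx, sq_sqrt hy, mul_nonneg (sqrt_nonneg x) (sqrt_nonneg y)]

theorem inv_sqrt_mul_inv_sqrt_le {x y : ℝ} (hx : 0 < x) (hy : 0 < y) :
    (√x)⁻¹ * (√y)⁻¹ ≤ ((√x)⁻¹ + (√y)⁻¹) / √(x + y) := by
  have hsx := sqrt_pos.2 hx
  have hsy := sqrt_pos.2 hy
  rw [le_div_iff₀ (sqrt_pos.2 (add_pos hx hy)), inv_add_inv hsx.ne' hsy.ne', div_eq_mul_inv,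
    ← mul_inv, mul_comm (√x + √y)]
  exact mul_le_mul_of_nonneg_left (sqrt_add_le_sqrt_add_sqrt hx.le hy.le) (by positivity)

theorem sum_Ico_inv_sqrt_le (n : ℕ) : ∑ k ∈ Ico 1 (n + 1), (√k)⁻¹ ≤ 2 * √n := by
  induction n with
  | zero => simp
  | succ n ih =>
    rw [sum_Ico_succ_top (by omega)]
    have hn := sq_sqrt (Nat.cast_nonneg (α := ℝ) n)
    have hn₁ := sq_sqrt (Nat.cast_nonneg (α := ℝ) (n + 1))
    have hpos : 0 < √((n + 1 : ℕ) : ℝ) := sqrt_pos.2 (by positivity)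
    -- AM-GM: `2 √n √(n+1) ≤ 2n + 1`, which is `1/√(n+1) ≤ 2√(n+1) - 2√n`.
    have hstep : (√((n + 1 : ℕ) : ℝ))⁻¹ ≤ 2 * √((n + 1 : ℕ) : ℝ) - 2 * √n := by
      rw [inv_le_iff_one_le_mul₀' hpos]
      push_cast at hn₁ ⊢
      nlinarith [sq_nonneg (√n - √((n : ℝ) + 1))]
    linarith

theorem sum_Ico_inv_sqrt_mul_inv_sqrt_sub_le (n : ℕ) :
    ∑ k ∈ Ico 1 n, (√k)⁻¹ * (√(n - k : ℕ))⁻¹ ≤ 4 := by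
  have hterm : ∀ k ∈ Ico 1 n,
      (√k)⁻¹ * (√(n - k : ℕ))⁻¹ ≤ ((√k)⁻¹ + (√(n - k : ℕ))⁻¹) / √n := by
    intro k hk
    obtain ⟨hk₁, hkn⟩ := mem_Ico.1 hk
    have hsum : (k : ℝ) + (n - k : ℕ) = n := by rw [Nat.cast_sub hkn.le]; ring
    exact hsum ▸ inv_sqrt_mul_inv_sqrt_le (by positivity) (by simp; omega)
  have hreflect : ∑ k ∈ Ico 1 n, (√(n - k : ℕ))⁻¹ = ∑ k ∈ Ico 1 n, (√k)⁻¹ := by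
    rw [sum_Ico_reflect (fun j => (√j)⁻¹) 1 (Nat.le_succ n), Nat.add_sub_cancel,
      Nat.add_sub_cancel_left]
  have hhalf : ∑ k ∈ Ico 1 n, (√k)⁻¹ ≤ 2 * √n :=
    (sum_le_sum_of_subset_of_nonneg (Ico_subset_Ico_right n.le_succ)
      fun _ _ _ => by positivity).trans (sum_Ico_inv_sqrt_le n)
  calc ∑ k ∈ Ico 1 n, (√k)⁻¹ * (√(n - k : ℕ))⁻¹
      ≤ ∑ k ∈ Ico 1 n, ((√k)⁻¹ + (√(n - k : ℕ))⁻¹) / √n := sum_le_sum hterm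
    _ = 2 * (∑ k ∈ Ico 1 n, (√k)⁻¹) / √n := by
        rw [← sum_div, sum_add_distrib, hreflect, two_mul]
    _ ≤ 4 := div_le_of_le_mul₀ (sqrt_nonneg _) (by norm_num) (by linarith)

namespace Real

theorem Gamma_add_le_Gamma_mul_rpow {y σ : ℝ} (hy : 0 < y) (hσ₀ : 0 < σ) (hσ₁ : σ < 1) :
    Gamma (y + σ) ≤ Gamma y * y ^ σ := by
  have hG := Gamma_pos_of_pos hy
  -- log-convexity of `Γ` between `y` and `y + 1`
  have h := Gamma_mul_add_mul_le_rpow_Gamma_mul_rpow_Gamma hy (by linarith : 0 < y + 1)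
    (sub_pos.2 hσ₁) hσ₀ (sub_add_cancel 1 σ)
  rw [show (1 - σ) * y + σ * (y + 1) = y + σ by ring, Gamma_add_one hy.ne',
    mul_rpow hy.le hG.le] at h
  calc Gamma (y + σ) ≤ Gamma y ^ (1 - σ) * (y ^ σ * Gamma y ^ σ) := h
    _ = Gamma y * y ^ σ := by
        rw [mul_left_comm, ← rpow_add hG, sub_add_cancel, rpow_one, mul_comm]

theorem mul_rpow_le_Gamma_add_div_Gamma {y σ : ℝ} (hy : 0 < y) (hσ₀ : 0 < σ) (hσ₁ : σ < 1) :
    y * (y + σ) ^ (σ - 1) ≤ Gamma (y + σ) / Gamma y := by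
  have hyσ : 0 < y + σ := by linarith
  have hW := Gamma_add_le_Gamma_mul_rpow hyσ (sub_pos.2 hσ₁) (by linarith)
  rw [add_add_sub_cancel, Gamma_add_one hy.ne'] at hW
  rw [le_div_iff₀ (Gamma_pos_of_pos hy), show σ - 1 = -(1 - σ) by ring, rpow_neg hyσ.le,
    mul_right_comm, ← div_eq_mul_inv, div_le_iff₀ (rpow_pos_of_pos hyσ _)]
  exact hW

theorem sqrt_div_three_le_Gamma_div_Gamma {α t : ℝ} (hα : α ∈ Set.Ioo (1 / 2) 1) (ht : 1 ≤ t) :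
    √t / 3 ≤ Gamma (α * t + 1) / Gamma (α * t - α + 1) := by
  obtain ⟨hα₀, hα₁⟩ := hα
  have hs : 1 ≤ α * t + 1 := by nlinarith
  have hW := mul_rpow_le_Gamma_add_div_Gamma (y := α * t - α + 1) (by nlinarith) (by linarith) hα₁
  rw [show α * t - α + 1 + α = α * t + 1 by ring] at hW
  have hst := sq_sqrt (by linarith : 0 ≤ t)
  have hss := sq_sqrt (by linarith : 0 ≤ α * t + 1)
  calc √t / 3 ≤ √(α * t + 1) / 2 := by
        nlinarith [sqrt_nonneg t, sqrt_nonneg (α * t + 1)]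
    _ ≤ (α * t + 1) ^ α / 2 := by
        rw [sqrt_eq_rpow]
        gcongr
    _ = (α * t + 1) / 2 * (α * t + 1) ^ (α - 1) := by
        rw [rpow_sub_one (by positivity)]
        field_simp
    _ ≤ (α * t - α + 1) * (α * t + 1) ^ (α - 1) := by
        gcongr
        nlinarith
    _ ≤ _ := hW

end Real

section RecursiveBound

variable {a : ℕ → ℝ} {B : ℝ}

theorem sum_Ico_abs_mul_abs_sub_le (hB : 0 ≤ B) {n : ℕ}
    (ha : ∀ k, 1 ≤ k → k < n → |a k| ≤ B ^ k / √k) :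
    ∑ k ∈ Ico 1 n, |a k| * |a (n - k)| ≤ 4 * B ^ n := by
  have hterm : ∀ k ∈ Ico 1 n,
      |a k| * |a (n - k)| ≤ B ^ n * ((√k)⁻¹ * (√(n - k : ℕ))⁻¹) := by
    intro k hk
    obtain ⟨hk₁, hkn⟩ := mem_Ico.1 hk
    calc |a k| * |a (n - k)| ≤ B ^ k / √k * (B ^ (n - k) / √(n - k : ℕ)) :=
          mul_le_mul (ha k hk₁ hkn) (ha (n - k) (by omega) (by omega)) (abs_nonneg _)
            (by positivity)
      _ = B ^ n * ((√k)⁻¹ * (√(n - k : ℕ))⁻¹) := by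
          rw [div_mul_div_comm, ← pow_add, Nat.add_sub_cancel' hkn.le, div_eq_mul_inv, mul_inv]
  calc ∑ k ∈ Ico 1 n, |a k| * |a (n - k)|
      ≤ ∑ k ∈ Ico 1 n, B ^ n * ((√k)⁻¹ * (√(n - k : ℕ))⁻¹) := sum_le_sum hterm
    _ = B ^ n * ∑ k ∈ Ico 1 n, (√k)⁻¹ * (√(n - k : ℕ))⁻¹ := (mul_sum ..).symm
    _ ≤ B ^ n * 4 := by gcongr; exact sum_Ico_inv_sqrt_mul_inv_sqrt_sub_le n
    _ = 4 * B ^ n := mul_comm _ _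

theorem abs_le_pow_div_sqrt_of_abs_succ_le {c : ℝ} (hc : 0 ≤ c) (ha₁ : |a 1| ≤ B)
    (hB : 3 * (c + 4) ≤ B)
    (hrec : ∀ n, 1 ≤ n →
      |a (n + 1)| ≤ 3 * (c * |a n| + ∑ k ∈ Ico 1 n, |a k| * |a (n - k)|) / √(n + 1 : ℕ)) :
    ∀ n, 1 ≤ n → |a n| ≤ B ^ n / √n := by
  have hB₀ : 0 ≤ B := (abs_nonneg _).trans ha₁
  intro n hn
  induction n using Nat.strong_induction_on with
  | _ n ih =>
    obtain rfl | ⟨n, hn₁, rfl⟩ : n = 1 ∨ ∃ m, 1 ≤ m ∧ n = m + 1 :=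
      (eq_or_ne n 1).imp id fun h => ⟨n - 1, by omega, by omega⟩
    · simpa using ha₁
    have hlast : |a n| ≤ B ^ n :=
      (ih n (by omega) hn₁).trans
        (div_le_self (by positivity) (one_le_sqrt.2 (by exact_mod_cast hn₁)))
    have hconv := sum_Ico_abs_mul_abs_sub_le hB₀ (n := n) fun k hk₁ hkn => ih k (by omega) hk₁
    calc |a (n + 1)| ≤ 3 * (c * |a n| + ∑ k ∈ Ico 1 n, |a k| * |a (n - k)|) / √(n + 1 : ℕ) :=
          hrec n hn₁
      _ ≤ 3 * (c * B ^ n + 4 * B ^ n) / √(n + 1 : ℕ) := by gcongr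
      _ = 3 * (c + 4) * B ^ n / √(n + 1 : ℕ) := by ring
      _ ≤ B ^ (n + 1) / √(n + 1 : ℕ) := by rw [pow_succ']; gcongr

end RecursiveBound

theorem summable_abs_mul_pow_of_abs_le_pow {a : ℕ → ℝ} {B : ℝ} (hB : 0 < B)
    (ha : ∀ n, 1 ≤ n → |a n| ≤ B ^ n) : Summable fun n => |a n| * (2 * B)⁻¹ ^ n := by
  refine summable_geometric_two.of_norm_bounded_eventually_nat ?_
  filter_upwards [Filter.eventually_ge_atTop 1] with n hn
  rw [norm_of_nonneg (by positivity)]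
  calc |a n| * (2 * B)⁻¹ ^ n ≤ B ^ n * (2 * B)⁻¹ ^ n := by gcongr; exact ha n hn
    _ = (1 / 2) ^ n := by rw [← mul_pow]; field_simp

theorem abs_riccati_coeff_succ_le {α d₂ : ℝ} (hα : α ∈ Set.Ioo (1 / 2 : ℝ) 1) {v a : ℕ → ℝ}
    (hv : ∀ n : ℕ, v n = Gamma (α * n + 1) / Gamma (α * n - α + 1))
    (harec : ∀ n : ℕ, 1 ≤ n →
      a (n + 1) = (d₂ * a n + ∑ k ∈ Ico 1 n, a k * a (n - k)) / v (n + 1))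
    {n : ℕ} (hn : 1 ≤ n) :
    |a (n + 1)| ≤ 3 * (|d₂| * |a n| + ∑ k ∈ Ico 1 n, |a k| * |a (n - k)|) / √(n + 1 : ℕ) := by
  have hv' : √(n + 1 : ℕ) / 3 ≤ v (n + 1) :=
    hv (n + 1) ▸ sqrt_div_three_le_Gamma_div_Gamma hα (by simp)
  have hnum : |d₂ * a n + ∑ k ∈ Ico 1 n, a k * a (n - k)|
      ≤ |d₂| * |a n| + ∑ k ∈ Ico 1 n, |a k| * |a (n - k)| := by
    calc _ ≤ |d₂ * a n| + |∑ k ∈ Ico 1 n, a k * a (n - k)| := abs_add_le _ _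
      _ ≤ _ := by
        rw [abs_mul]
        gcongr
        simpa only [abs_mul] using abs_sum_le_sum_abs (fun k => a k * a (n - k)) (Ico 1 n)
  rw [harec n hn, abs_div, abs_of_pos (lt_of_lt_of_le (by positivity) hv')]
  calc _ ≤ (|d₂| * |a n| + ∑ k ∈ Ico 1 n, |a k| * |a (n - k)|) / (√(n + 1 : ℕ) / 3) :=
        div_le_div₀ (by positivity) hnum (by positivity) hv'
    _ = _ := by rw [div_div_eq_mul_div, mul_comm]

theorem riccati_coeff_upper_bound_general (α d₂ : ℝ) (hα : α ∈ Set.Ioo (1/2 : ℝ) 1)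
    (v a : ℕ → ℝ)
    (hv : ∀ n : ℕ, v n = Real.Gamma (α * n + 1) / Real.Gamma (α * n - α + 1))
    (harec : ∀ n : ℕ, 1 ≤ n →
      a (n + 1) = (d₂ * a n + ∑ k ∈ Finset.Ico 1 n, a k * a (n - k)) / v (n + 1)) :
    (∃ A > (0:ℝ), ∀ n : ℕ, 1 ≤ n → |a n| ≤ A ^ n * (n : ℝ) ^ (α - 1)) ∧
    (∃ r : ℝ, 0 < r ∧ Summable fun n : ℕ => |a n| * r ^ n) := by
  set B := max |a 1| (3 * (|d₂| + 4))
  have hB : 0 < B := lt_max_of_lt_right (by positivity)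
  have hbound := abs_le_pow_div_sqrt_of_abs_succ_le (abs_nonneg d₂) (le_max_left _ _)
    (le_max_right _ _) fun n hn => abs_riccati_coeff_succ_le hα hv harec hn
  refine ⟨⟨B, hB, fun n hn => (hbound n hn).trans ?_⟩,
    ⟨(2 * B)⁻¹, by positivity,
      summable_abs_mul_pow_of_abs_le_pow hB fun n hn => (hbound n hn).trans ?_⟩⟩
  · have hn' : (1 : ℝ) ≤ n := by exact_mod_cast hn
    rw [div_eq_mul_inv, sqrt_eq_rpow, ← rpow_neg (by positivity)]
    gcongr
    linarith [hα.1]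
  · exact div_le_self (by positivity) (one_le_sqrt.2 (by exact_mod_cast hn))

/-- Geometric-type upper bound `|a_n| ≤ A^n n^(α-1)` for the coefficients of the
fractional power series solution of the fractional Riccati equation
`D^α f = d₁ + d₂ f + f²`; in particular the power series `∑ a_n zⁿ` has positive
radius of convergence. -/
theorem riccati_coeff_upper_bound (α d₁ d₂ : ℝ) (hα : α ∈ Set.Ioo (1/2 : ℝ) 1)
    (hd₁ : 0 < d₁) (v a : ℕ → ℝ)
    (hv : ∀ n : ℕ, v n = Real.Gamma (α * n + 1) / Real.Gamma (α * n - α + 1))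
    (ha1 : a 1 = d₁ / v 1)
    (harec : ∀ n : ℕ, 1 ≤ n →
      a (n + 1) = (d₂ * a n + ∑ k ∈ Finset.Ico 1 n, a k * a (n - k)) / v (n + 1)) :
    (∃ A > (0:ℝ), ∀ n : ℕ, 1 ≤ n → |a n| ≤ A ^ n * (n : ℝ) ^ (α - 1)) ∧
    (∃ r : ℝ, 0 < r ∧ Summable fun n : ℕ => |a n| * r ^ n) :=
  riccati_coeff_upper_bound_general α d₂ hα v a hv harec
end

section
/- (Pringsheim's theorem) Suppose the power series F(z) = ∑_{n≥0} a_n zⁿ has finite positive radius of convergence R and all coefficients a_n are nonnegative real numbers. Then F cannot be extended to a function analytic in a neighborhood of z = R; i.e., z = R is a singular point of F. -/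
open Filter Metric Topology
open scoped NNReal ENNReal

/-!
Suppose `F(z) = ∑ aₙ zⁿ` had an analytic extension `g` at `R`. Gluing `g` to `F` gives a function
holomorphic on `‖z‖ < R` together with a small disc around `R`; this region contains a disc
around `R/2` of radius `R/2 + δ`, so the Taylor series of `F` at `R/2` converges at
`t = R/2 + δ/2`. Its coefficients `bₖ = ∑ₙ aₙ C(n,k) (R/2)^(n-k)` are nonnegative, so the double
series may be rearranged freely: `∑ₖ bₖ tᵏ = ∑ₙ aₙ (R/2 + t)ⁿ`, and `∑ aₙ rⁿ` converges at
`r = R + δ/2 > R`.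
-/

/-- The `k`-th Taylor coefficient at `x` of `∑ aₙ zⁿ`. -/
noncomputable def recenteredCoeff {α : Type*} [Semiring α] [TopologicalSpace α]
    (a : ℕ → α) (x : α) (k : ℕ) : α :=
  ∑' n, a n * n.choose k * x ^ (n - k)

lemma hasSum_choose_mul_pow {α : Type*} [CommSemiring α] [TopologicalSpace α] (A x y : α)
    (n : ℕ) : HasSum (fun k => A * n.choose k * x ^ (n - k) * y ^ k) (A * (x + y) ^ n) := by
  have hsupp : ∀ k ∉ Finset.range (n + 1), A * n.choose k * x ^ (n - k) * y ^ k = 0 := by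
    intro k hk
    rw [Finset.mem_range, not_lt] at hk
    simp [Nat.choose_eq_zero_of_lt hk]
  have h : HasSum (fun k => A * n.choose k * x ^ (n - k) * y ^ k) _ :=
    hasSum_sum_of_ne_finset_zero hsupp
  convert h using 1
  rw [add_comm x y, add_pow, Finset.mul_sum]
  exact Finset.sum_congr rfl fun k _ => by ring

lemma hasSum_recenteredCoeff_mul_pow {𝕜 : Type*} [NormedField 𝕜] [CompleteSpace 𝕜]
    (a : ℕ → 𝕜) (x y : 𝕜)
    (h : Summable fun p : ℕ × ℕ => a p.1 * p.1.choose p.2 * x ^ (p.1 - p.2) * y ^ p.2) :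
    HasSum (fun k => recenteredCoeff a x k * y ^ k) (∑' n, a n * (x + y) ^ n) := by
  have hrows := h.hasSum.prod_fiberwise fun n => hasSum_choose_mul_pow (a n) x y n
  have hswap := (Equiv.prodComm ℕ ℕ).hasSum_iff.mpr h.hasSum
  rw [hrows.tsum_eq]
  refine hswap.prod_fiberwise fun k => ?_
  rw [recenteredCoeff, ← tsum_mul_right]
  exact (hswap.summable.prod_factor k).hasSum

lemma ofReal_recenteredCoeff (a : ℕ → ℝ) (x : ℝ) (k : ℕ) :
    ((recenteredCoeff a x k : ℝ) : ℂ) = recenteredCoeff (fun n => (a n : ℂ)) (x : ℂ) k := by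
  rw [recenteredCoeff, Complex.ofReal_tsum]
  push_cast
  rfl

section Nonneg

variable {a : ℕ → ℝ} {x t : ℝ}

lemma recenteredCoeff_nonneg (ha : ∀ n, 0 ≤ a n) (hx : 0 ≤ x) (k : ℕ) :
    0 ≤ recenteredCoeff a x k :=
  tsum_nonneg fun n => by have := ha n; positivity

lemma summable_choose_mul_pow_prod_iff (ha : ∀ n, 0 ≤ a n) (hx : 0 ≤ x) (ht : 0 ≤ t) :
    Summable (fun p : ℕ × ℕ => a p.1 * p.1.choose p.2 * x ^ (p.1 - p.2) * t ^ p.2) ↔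
      Summable fun n => a n * (x + t) ^ n := by
  rw [summable_prod_of_nonneg fun p => by have := ha p.1; positivity]
  simp only [fun n => (hasSum_choose_mul_pow (a n) x t n).tsum_eq,
    fun n => (hasSum_choose_mul_pow (a n) x t n).summable, implies_true, true_and]

lemma summable_mul_add_pow_iff (ha : ∀ n, 0 ≤ a n) (hx : 0 ≤ x) (ht : 0 < t) :
    Summable (fun n => a n * (x + t) ^ n) ↔
      (∀ k, Summable fun n => a n * n.choose k * x ^ (n - k)) ∧
        Summable fun k => recenteredCoeff a x k * t ^ k := by
  have hswap : Summable (fun p : ℕ × ℕ => a p.1 * p.1.choose p.2 * x ^ (p.1 - p.2) * t ^ p.2) ↔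
      Summable fun p : ℕ × ℕ => a p.2 * p.2.choose p.1 * x ^ (p.2 - p.1) * t ^ p.1 :=
    (Equiv.prodComm ℕ ℕ).summable_iff.symm
  rw [← summable_choose_mul_pow_prod_iff ha hx ht.le, hswap,
    summable_prod_of_nonneg fun p => by have := ha p.2; positivity]
  simp only [recenteredCoeff, tsum_mul_right, summable_mul_right_iff (pow_ne_zero _ ht.ne')]

lemma hasFPowerSeriesOnBall_recenteredCoeff (ha : ∀ n, 0 ≤ a n) (hx : 0 ≤ x) {r : ℝ≥0}
    (hr : 0 < r) (hsum : Summable fun n => a n * (x + r) ^ n) :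
    HasFPowerSeriesOnBall (fun z : ℂ => ∑' n, (a n : ℂ) * z ^ n)
      (FormalMultilinearSeries.ofScalars ℂ fun k => ((recenteredCoeff a x k : ℝ) : ℂ)) x r := by
  refine ⟨?_, by exact_mod_cast hr, fun {y} hy => ?_⟩
  · refine FormalMultilinearSeries.le_radius_of_summable_norm _ ?_
    simpa [FormalMultilinearSeries.ofScalars_norm, abs_of_nonneg (recenteredCoeff_nonneg ha hx _)]
      using ((summable_mul_add_pow_iff ha hx hr).mp hsum).2
  have hyr : ‖y‖ ≤ r := mod_cast (mem_eball_zero_iff.mp hy).le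
  have hsum_y : Summable fun n => a n * (x + ‖y‖) ^ n :=
    hsum.of_nonneg_of_le (fun n => by have := ha n; positivity) fun n => by have := ha n; gcongr
  have habs : Summable fun p : ℕ × ℕ =>
      (a p.1 : ℂ) * p.1.choose p.2 * (x : ℂ) ^ (p.1 - p.2) * y ^ p.2 :=
    .of_norm <| ((summable_choose_mul_pow_prod_iff ha hx (norm_nonneg y)).mpr hsum_y).congr
      fun p => by simp [abs_of_nonneg (ha p.1), abs_of_nonneg hx]
  have hterm : ∀ k, (FormalMultilinearSeries.ofScalars ℂ fun k => ((recenteredCoeff a x k : ℝ) : ℂ))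
      k (fun _ => y) = recenteredCoeff (fun n => (a n : ℂ)) (x : ℂ) k * y ^ k := fun k => by
    rw [FormalMultilinearSeries.ofScalars_apply_eq, smul_eq_mul, ofReal_recenteredCoeff]
  simp only [hterm]
  exact hasSum_recenteredCoeff_mul_pow (fun n => (a n : ℂ)) x y habs

end Nonneg

lemma differentiableOn_tsum_mul_pow {a : ℕ → ℂ} {R : ℝ}
    (hconv : ∀ z : ℂ, ‖z‖ < R → Summable fun n => a n * z ^ n) :
    DifferentiableOn ℂ (fun z => ∑' n, a n * z ^ n) (ball 0 R) := by
  set q := FormalMultilinearSeries.ofScalars ℂ a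
  intro z hz
  obtain ⟨r, hzr, hrR⟩ := exists_between (mem_ball_zero_iff.mp hz)
  have hr : (r.toNNReal : ℝ≥0∞) ≤ q.radius :=
    q.le_radius_of_tendsto (l := 0) <| by
      have hr0 : 0 ≤ r := (norm_nonneg z).trans hzr.le
      simpa [q, FormalMultilinearSeries.ofScalars_norm, hr0, abs_of_nonneg hr0] using
        (hconv r (by simpa [abs_of_nonneg hr0] using hrR)).tendsto_atTop_zero.norm
  have hzq : ‖z‖ₑ < q.radius := by
    refine lt_of_lt_of_le ?_ hr
    rw [← ofReal_norm, ENNReal.ofReal, ENNReal.coe_lt_coe]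
    exact Real.toNNReal_lt_toNNReal_iff_of_nonneg (norm_nonneg z) |>.mpr hzr
  have hq := (q.hasFPowerSeriesOnBall (pos_of_gt hzq)).analyticAt_of_mem (by simpa using hzq)
  refine (hq.differentiableAt.congr_of_eventuallyEq (.of_forall fun w => ?_)).differentiableWithinAt
  simp only [q, FormalMultilinearSeries.sum, FormalMultilinearSeries.ofScalars_apply_eq,
    smul_eq_mul]

lemma exists_differentiableOn_union_ball {E : Type*} [NormedAddCommGroup E] [NormedSpace ℂ E]
    [CompleteSpace E] {f g : ℂ → E} {U : Set ℂ} {c : ℂ} (hU : IsOpen U)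
    (hf : DifferentiableOn ℂ f U)
    (hg : AnalyticAt ℂ g c) (hgf : ∀ᶠ z in 𝓝[U] c, g z = f z) :
    ∃ ε > 0, ∃ h : ℂ → E, DifferentiableOn ℂ h (U ∪ ball c ε) ∧ Set.EqOn h f U := by
  classical
  rw [eventually_nhdsWithin_iff, Metric.eventually_nhds_iff] at hgf
  obtain ⟨ε₀, hε₀, hgf⟩ := hgf
  obtain ⟨ε₁, hε₁, hg⟩ := Metric.eventually_nhds_iff.mp hg.eventually_analyticAt
  refine ⟨min ε₀ ε₁, lt_min hε₀ hε₁, U.piecewise f g, ?_, Set.piecewise_eqOn U f g⟩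
  have hgU : Set.EqOn (U.piecewise f g) g (ball c (min ε₀ ε₁)) := fun z hz => by
    by_cases hzU : z ∈ U
    · rw [Set.piecewise_eq_of_mem U f g hzU, hgf (hz.trans_le (min_le_left _ _)) hzU]
    · exact Set.piecewise_eq_of_notMem U f g hzU
  rintro z (hz | hz)
  · exact ((hf z hz).differentiableAt (hU.mem_nhds hz)).congr_of_eventuallyEq
      (eventually_of_mem (hU.mem_nhds hz) (Set.piecewise_eqOn U f g)) |>.differentiableWithinAt
  · exact (hg (hz.trans_le (min_le_right _ _))).differentiableAt.congr_of_eventuallyEq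
      (eventually_of_mem (isOpen_ball.mem_nhds hz) hgU) |>.differentiableWithinAt

lemma HasFPowerSeriesAt.ofReal_le_radius_of_differentiableOn {E : Type*} [NormedAddCommGroup E]
    [NormedSpace ℂ E] [CompleteSpace E] {f : ℂ → E} {p : FormalMultilinearSeries ℂ ℂ E} {c : ℂ}
    {r : ℝ} (hp : HasFPowerSeriesAt f p c) (hf : DifferentiableOn ℂ f (ball c r)) :
    ENNReal.ofReal r ≤ p.radius := by
  refine ENNReal.le_of_forall_nnreal_lt fun ρ hρ => ?_
  rcases eq_or_ne ρ 0 with rfl | hρ0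
  · simp
  have hρr : (ρ : ℝ) < r := by
    simpa using (ENNReal.lt_ofReal_iff_toReal_lt ENNReal.coe_ne_top).mp hρ
  have hcauchy :=
    (hf.mono (closedBall_subset_ball hρr)).hasFPowerSeriesOnBall (pos_iff_ne_zero.mpr hρ0)
  rw [hp.eq_formalMultilinearSeries hcauchy.hasFPowerSeriesAt]
  exact hcauchy.r_le

lemma closedBall_midpoint_subset_insert_ball {V : Type*} [NormedAddCommGroup V]
    [InnerProductSpace ℝ V] (c : V) :
    closedBall (midpoint ℝ 0 c) (‖c‖ / 2) ⊆ insert c (ball 0 ‖c‖) := by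
  intro z hz
  rcases eq_or_ne z c with rfl | hzc
  · exact Set.mem_insert _ _
  refine Set.mem_insert_of_mem _ (mem_ball_zero_iff.mpr ?_)
  have hapollonius :=
    EuclideanGeometry.dist_sq_add_dist_sq_eq_two_mul_dist_midpoint_sq_add_half_dist_sq z 0 c
  rw [dist_zero_right, dist_zero_left] at hapollonius
  have hzc' := dist_pos.mpr hzc
  have hz' := mem_closedBall.mp hz
  rw [← sq_lt_sq₀ (norm_nonneg z) (norm_nonneg c)]
  nlinarith [dist_nonneg (x := z) (y := midpoint ℝ 0 c)]

lemma exists_ball_subset_ball_union_ball {R ε : ℝ} (hR : 0 ≤ R) (hε : 0 < ε) :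
    ∃ δ > 0, ball ((R / 2 : ℝ) : ℂ) (R / 2 + δ) ⊆ ball 0 R ∪ ball (R : ℂ) ε := by
  have hmid : midpoint ℝ (0 : ℂ) R = ((R / 2 : ℝ) : ℂ) := by
    rw [midpoint_eq_smul_add, zero_add, invOf_eq_inv, Complex.real_smul]
    push_cast
    ring
  have hsub : closedBall ((R / 2 : ℝ) : ℂ) (R / 2) ⊆ ball 0 R ∪ ball (R : ℂ) ε := by
    have := closedBall_midpoint_subset_insert_ball (R : ℂ)
    rw [hmid, Complex.norm_real, Real.norm_of_nonneg hR] at this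
    exact this.trans (Set.insert_subset (Or.inr (mem_ball_self hε)) Set.subset_union_left)
  obtain ⟨δ, hδ, hδsub⟩ :=
    (isCompact_closedBall _ _).exists_cthickening_subset_open (isOpen_ball.union isOpen_ball) hsub
  rw [cthickening_closedBall hδ.le (by positivity)] at hδsub
  exact ⟨δ, hδ, ball_subset_closedBall.trans (by rwa [add_comm])⟩

/-- Pringsheim's theorem: a power series with nonnegative real coefficients and
finite positive radius of convergence `R` has a singularity at `z = R`, i.e. there is
no function analytic at `R` agreeing with the series near `R` inside the disc. -/
theorem pringsheim (a : ℕ → ℝ) (ha : ∀ n, 0 ≤ a n) (R : ℝ) (hR : 0 < R)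
    (hconv : ∀ z : ℂ, ‖z‖ < R → Summable fun n : ℕ => (a n : ℂ) * z ^ n)
    (hdiv : ∀ r : ℝ, R < r → ¬ Summable fun n : ℕ => a n * r ^ n) :
    ¬ ∃ g : ℂ → ℂ, AnalyticAt ℂ g (R : ℂ) ∧
      ∀ᶠ z in nhdsWithin (R : ℂ) (Metric.ball (0:ℂ) R),
        g z = ∑' n : ℕ, (a n : ℂ) * z ^ n := by
  rintro ⟨g, hg, hgF⟩
  obtain ⟨ε, hε, h, hh, hhF⟩ :=
    exists_differentiableOn_union_ball isOpen_ball (differentiableOn_tsum_mul_pow hconv) hg hgF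
  obtain ⟨δ, hδ, hball⟩ := exists_ball_subset_ball_union_ball hR.le hε
  have hx : 0 ≤ R / 2 := by positivity
  have hsum : Summable fun n => a n * (R / 2 + R / 4) ^ n := by
    have hR34 : ‖((R / 2 + R / 4 : ℝ) : ℂ)‖ < R := by
      rw [Complex.norm_real, Real.norm_of_nonneg (by positivity)]
      linarith
    rw [← Complex.summable_ofReal]
    exact_mod_cast hconv _ hR34
  have hR4 : ((R / 4).toNNReal : ℝ) = R / 4 := Real.coe_toNNReal _ (by positivity)
  have hF := hasFPowerSeriesOnBall_recenteredCoeff ha hx (by positivity) (hR4 ▸ hsum)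
  have hx_mem : ((R / 2 : ℝ) : ℂ) ∈ ball 0 R := by
    simp [abs_of_pos hR]
    linarith
  have hP := hF.hasFPowerSeriesAt.congr
    (eventually_of_mem (isOpen_ball.mem_nhds hx_mem) fun z hz => (hhF hz).symm)
  have hrad := hP.ofReal_le_radius_of_differentiableOn (hh.mono hball)
  have hρ : ((R / 2 + δ / 2).toNNReal : ℝ≥0∞) < ENNReal.ofReal (R / 2 + δ) :=
    (ENNReal.ofReal_lt_ofReal_iff (by positivity)).mpr (by linarith)
  have hcoeff : Summable fun k => recenteredCoeff a (R / 2) k * (R / 2 + δ / 2) ^ k := by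
    simpa [FormalMultilinearSeries.ofScalars_norm, abs_of_nonneg (recenteredCoeff_nonneg ha hx _),
      Real.coe_toNNReal _ (show 0 ≤ R / 2 + δ / 2 by positivity)]
      using FormalMultilinearSeries.summable_norm_mul_pow _ (hρ.trans_le hrad)
  have hcol := ((summable_mul_add_pow_iff ha hx (by positivity)).mp hsum).1
  exact hdiv _ (by linarith) ((summable_mul_add_pow_iff ha hx (by positivity)).mpr ⟨hcol, hcoeff⟩)
end

section
/- Fix α ∈ (1/2,1), and let G(u,w) = (w + e₀(u))² - e₁(u) with e₀(u) ≥ 0 and e₁(u) < e₀(u)² (case (A) of the rough Heston model). Then ∫₀^∞ (w/G(u,w))^(1/α) dw/w ≤ C u^(-1/α) for some constant C > 0 and all sufficiently large u, where e₀(u) = (ρξu-λ)/2 and G(u,0) = c₃c₁(u) with c₁(u) = u(u-1)/2, c₃ = ξ²/2. In particular this integral tends to 0 as u → ∞. -/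
open MeasureTheory Set

set_option maxHeartbeats 1000000 in
/-- In case (A) of the rough Heston model, the integral
`∫₀^∞ (w/G(u,w))^(1/α) dw/w` with `G(u,w) = (w+e₀(u))² - e₁(u)` is bounded by
`C u^(-1/α)` for all sufficiently large `u`; in particular it tends to `0`. -/
theorem caseA_integral_estimate (α ρ ξ lam : ℝ) (hα : α ∈ Set.Ioo (1/2 : ℝ) 1)
    (hξ : 0 < ξ) (hlam : 0 < lam) :
    ∃ C > (0:ℝ), ∃ u₀ : ℝ, ∀ u ≥ u₀,
      0 ≤ (ρ * ξ * u - lam) / 2 →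
      (((ρ * ξ * u - lam) / 2) ^ 2 - ξ ^ 2 * u * (u - 1) / 4)
        < ((ρ * ξ * u - lam) / 2) ^ 2 →
      (∫ w in Set.Ioi (0:ℝ),
          (w / ((w + (ρ * ξ * u - lam) / 2) ^ 2
            - (((ρ * ξ * u - lam) / 2) ^ 2 - ξ ^ 2 * u * (u - 1) / 4))) ^ (1/α) / w)
        ≤ C * u ^ (-(1/α)) := by
  obtain ⟨hα1, hα2⟩ := hα
  have hα0 : 0 < α := by linarith
  set p : ℝ := 1/α with hp_def
  have hp0 : 0 < p := by positivity
  have hp1 : 1 < p := by rw [hp_def, lt_div_iff₀ hα0]; linarith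
  have hp2 : p < 2 := by rw [hp_def, div_lt_iff₀ hα0]; linarith
  refine ⟨2 * α * (ξ^2/8) ^ (-p/2), by positivity, 2, fun u hu he hKlt => ?_⟩
  have hu0 : (0:ℝ) < u := by linarith
  set e : ℝ := (ρ * ξ * u - lam) / 2 with he_def
  set K : ℝ := ξ ^ 2 * u * (u - 1) / 4 with hK_def
  have hK : 0 < K := by linarith
  set b : ℝ := K ^ ((1:ℝ)/2) with hb_def
  have hb : 0 < b := Real.rpow_pos_of_pos hK _
  -- the majorant
  set h : ℝ → ℝ := fun w => if w ≤ b then K ^ (-p) * w ^ (p - 1) else w ^ (-p - 1)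
    with hh_def
  -- integrability of the majorant on the two pieces
  have hint1 : IntegrableOn h (Ioc 0 b) := by
    have : IntegrableOn (fun w : ℝ => K ^ (-p) * w ^ (p - 1)) (Ioc 0 b) := by
      rw [← intervalIntegrable_iff_integrableOn_Ioc_of_le hb.le]
      exact (intervalIntegral.intervalIntegrable_rpow' (by linarith)).const_mul _
    refine this.congr_fun (fun w hw => ?_) measurableSet_Ioc
    simp [hh_def, hw.2]
  have hint2 : IntegrableOn h (Ioi b) := by
    refine (integrableOn_Ioi_rpow_of_lt (by linarith : -p - 1 < -1) hb).congr_fun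
      (fun w hw => ?_) measurableSet_Ioi
    simp [hh_def, not_le.mpr (mem_Ioi.mp hw)]
  have hunion : Ioc (0:ℝ) b ∪ Ioi b = Ioi 0 := Ioc_union_Ioi_eq_Ioi hb.le
  have hint : IntegrableOn h (Ioi 0) := by
    rw [← hunion]; exact hint1.union hint2
  -- pointwise bound
  have hbound : ∀ w ∈ Ioi (0:ℝ),
      (w / ((w + e) ^ 2 - (e ^ 2 - K))) ^ p / w ≤ h w := by
    intro w hw
    rw [mem_Ioi] at hw
    have hG : (w + e) ^ 2 - (e ^ 2 - K) = w ^ 2 + 2 * e * w + K := by ring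
    have hGpos : 0 < w ^ 2 + 2 * e * w + K := by nlinarith
    rw [hG, hh_def]
    by_cases hwb : w ≤ b
    · simp only [if_pos hwb]
      have h1 : w / (w ^ 2 + 2 * e * w + K) ≤ w / K :=
        div_le_div_of_nonneg_left hw.le hK (by nlinarith)
      have h2 : (w / (w ^ 2 + 2 * e * w + K)) ^ p ≤ (w / K) ^ p :=
        Real.rpow_le_rpow (by positivity) h1 hp0.le
      calc (w / (w ^ 2 + 2 * e * w + K)) ^ p / w ≤ (w / K) ^ p / w := by
            exact div_le_div_of_nonneg_right h2 hw.le
        _ = K ^ (-p) * w ^ (p - 1) := by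
            rw [Real.div_rpow hw.le hK.le, Real.rpow_sub hw, Real.rpow_one,
              Real.rpow_neg hK.le]
            field_simp
    · simp only [if_neg hwb]
      have h1 : w / (w ^ 2 + 2 * e * w + K) ≤ w / w ^ 2 :=
        div_le_div_of_nonneg_left hw.le (by positivity) (by nlinarith)
      have h2 : (w / (w ^ 2 + 2 * e * w + K)) ^ p ≤ (w / w ^ 2) ^ p :=
        Real.rpow_le_rpow (by positivity) h1 hp0.le
      have h3 : (w / w ^ 2 : ℝ) = w⁻¹ := by field_simp
      calc (w / (w ^ 2 + 2 * e * w + K)) ^ p / w ≤ (w / w ^ 2) ^ p / w :=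
            div_le_div_of_nonneg_right h2 hw.le
        _ = w ^ (-p - 1) := by
            have h4 : w ^ (-p - 1) = w ^ (-p) / w := by
              rw [Real.rpow_sub hw, Real.rpow_one]
            rw [h3, h4, ← Real.rpow_neg_one w, ← Real.rpow_mul hw.le]
            norm_num
  -- compare integrals
  have hmono : (∫ w in Set.Ioi (0:ℝ), (w / ((w + e) ^ 2 - (e ^ 2 - K))) ^ p / w)
      ≤ ∫ w in Set.Ioi (0:ℝ), h w := by
    refine integral_mono_of_nonneg ?_ hint ?_
    · rw [Filter.EventuallyLE, ae_restrict_iff' measurableSet_Ioi]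
      filter_upwards with w hw
      rw [mem_Ioi] at hw
      have hG : (w + e) ^ 2 - (e ^ 2 - K) = w ^ 2 + 2 * e * w + K := by ring
      have hGpos : 0 < w ^ 2 + 2 * e * w + K := by nlinarith
      rw [Pi.zero_apply, hG]
      positivity
    · rw [Filter.EventuallyLE, ae_restrict_iff' measurableSet_Ioi]
      filter_upwards with w hw
      exact hbound w hw
  -- compute the integral of the majorant
  have hsplit : (∫ w in Set.Ioi (0:ℝ), h w)
      = (∫ w in Ioc (0:ℝ) b, h w) + ∫ w in Ioi b, h w := by
    rw [← hunion]
    exact setIntegral_union (Ioc_disjoint_Ioi le_rfl) measurableSet_Ioi hint1 hint2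
  have hI1 : (∫ w in Ioc (0:ℝ) b, h w) = K ^ (-p) * (b ^ p / p) := by
    have : (∫ w in Ioc (0:ℝ) b, h w)
        = ∫ w in Ioc (0:ℝ) b, K ^ (-p) * w ^ (p - 1) := by
      refine setIntegral_congr_fun measurableSet_Ioc (fun w hw => ?_)
      simp [hh_def, hw.2]
    rw [this, ← intervalIntegral.integral_of_le hb.le,
      intervalIntegral.integral_const_mul,
      integral_rpow (Or.inl (by linarith : (-1:ℝ) < p - 1))]
    rw [sub_add_cancel, Real.zero_rpow (by linarith : p ≠ 0)]
    ring
  have hI2 : (∫ w in Ioi b, h w) = b ^ (-p) / p := by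
    have : (∫ w in Ioi b, h w) = ∫ w in Ioi b, w ^ (-p - 1) := by
      refine setIntegral_congr_fun measurableSet_Ioi (fun w hw => ?_)
      simp [hh_def, not_le.mpr (mem_Ioi.mp hw)]
    rw [this, integral_Ioi_rpow_of_lt (by linarith : -p - 1 < -1) hb]
    rw [show -p - 1 + 1 = -p by ring]
    field_simp
  have hbp : b ^ p = K ^ (p/2) := by
    rw [hb_def, ← Real.rpow_mul hK.le]; ring_nf
  have hbnp : b ^ (-p) = K ^ (-p/2) := by
    rw [hb_def, ← Real.rpow_mul hK.le]; ring_nf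
  have hKnp : K ^ (-p) * K ^ (p/2) = K ^ (-p/2) := by
    rw [← Real.rpow_add hK]; ring_nf
  have htotal : (∫ w in Set.Ioi (0:ℝ), h w) = 2 * α * K ^ (-p/2) := by
    rw [hsplit, hI1, hI2, hbp, hbnp, ← mul_div_assoc, hKnp]
    rw [hp_def]
    field_simp
    ring
  -- final estimate
  have hKlb : ξ ^ 2 / 8 * u ^ 2 ≤ K := by
    rw [hK_def]
    nlinarith [mul_nonneg (mul_nonneg (sq_nonneg ξ) hu0.le) (by linarith : (0:ℝ) ≤ u - 2)]
  have hKest : K ^ (-p/2) ≤ (ξ^2/8) ^ (-p/2) * u ^ (-p) := by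
    have h1 : K ^ (-p/2) ≤ (ξ ^ 2 / 8 * u ^ 2) ^ (-p/2) :=
      Real.rpow_le_rpow_of_nonpos (by positivity) hKlb (by linarith)
    have h2 : (ξ ^ 2 / 8 * u ^ 2 : ℝ) ^ (-p/2) = (ξ^2/8) ^ (-p/2) * u ^ (-p) := by
      rw [Real.mul_rpow (by positivity) (by positivity),
        ← Real.rpow_natCast u 2, ← Real.rpow_mul hu0.le]
      rw [show ((2:ℕ):ℝ) * (-p/2) = -p by push_cast; ring]
    rw [← h2]; exact h1
  calc (∫ w in Set.Ioi (0:ℝ), (w / ((w + e) ^ 2 - (e ^ 2 - K))) ^ p / w)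
      ≤ ∫ w in Set.Ioi (0:ℝ), h w := hmono
    _ = 2 * α * K ^ (-p/2) := htotal
    _ ≤ 2 * α * ((ξ^2/8) ^ (-p/2) * u ^ (-p)) := by
        apply mul_le_mul_of_nonneg_left hKest (by positivity)
    _ = 2 * α * (ξ^2/8) ^ (-p/2) * u ^ (-p) := by ring
end
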